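/- arXiv:1903.04541 — 3 statements merged into one kernel-verified Lean document; each statement's English description precedes it below -/
import Mathlib

section
/- Let r ≥ 2, t ≥ 3, and let G be a graph with a vertex v of degree exactly r(t−1), and let e be an edge incident to v. Then c_{r,S_t}(G − e) ≥ c_{r,S_t}(G), where G − e is obtained from G by deleting the edge e. -/
open SimpleGraph Finset

/-- `G` contains a copy of `H`, i.e. a subgraph isomorphic to `H`. -/
def SimpleGraph.ContainsCopy {V W : Type*} (G : SimpleGraph V) (H : SimpleGraph W) : Prop :=
  ∃ f : H →g G, Function.Injective f

/-- The color class of color `i` in the `r`-edge-coloring `c` of `G`. -/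
def colorClass {V : Type*} {r : ℕ} (G : SimpleGraph V) (c : G.edgeSet → Fin r) (i : Fin r) :
    SimpleGraph V :=
  SimpleGraph.fromEdgeSet {e | ∃ h : e ∈ G.edgeSet, c ⟨e, h⟩ = i}

/-- The coloring `c` of `G` has a monochromatic copy of `H`. -/
def HasMonoCopy {V W : Type*} {r : ℕ} (G : SimpleGraph V) (H : SimpleGraph W)
    (c : G.edgeSet → Fin r) : Prop :=
  ∃ i : Fin r, (colorClass G c i).ContainsCopy H

/-- `c_{r,H}(G)`: the number of `r`-edge-colorings of `G` without a monochromatic copy of `H`. -/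
noncomputable def goodCount {V W : Type*} (r : ℕ) (H : SimpleGraph W) (G : SimpleGraph V) : ℕ :=
  Nat.card {c : G.edgeSet → Fin r // ¬ HasMonoCopy G H c}

/-- `c_{r,H}(n)`: the maximum of `c_{r,H}(G)` over all graphs `G` on `n` vertices. -/
noncomputable def cMax {W : Type*} (r : ℕ) (H : SimpleGraph W) (n : ℕ) : ℕ :=
  sSup {k | ∃ G : SimpleGraph (Fin n), goodCount r H G = k}

/-- `ex(n,H)`: the maximum number of edges of an `H`-free graph on `n` vertices. -/
noncomputable def exNum {W : Type*} (n : ℕ) (H : SimpleGraph W) : ℕ :=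
  sSup {k | ∃ G : SimpleGraph (Fin n), ¬ G.ContainsCopy H ∧ G.edgeSet.ncard = k}

/-- The star `S_t` with `t` edges: center `0` joined to `t` leaves. -/
def starGraph (t : ℕ) : SimpleGraph (Fin (t + 1)) where
  Adj u v := u ≠ v ∧ (u = 0 ∨ v = 0)
  symm := ⟨fun u v h => ⟨h.1.symm, h.2.symm⟩⟩
  loopless := ⟨fun u h => h.1 rfl⟩

section

variable {V : Type*}

namespace SimpleGraph

lemma degree_lt_degree_of_le {G H : SimpleGraph V} {v w : V} [Fintype (G.neighborSet v)]
    [Fintype (H.neighborSet v)] (hle : G ≤ H) (hH : H.Adj v w) (hG : ¬ G.Adj v w) :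
    G.degree v < H.degree v := by
  simp_rw [← card_neighborSet_eq_degree]
  exact Set.card_lt_card ⟨fun u hu => hle hu, fun hsub => hG (hsub hH)⟩

lemma containsCopy_starGraph_of_le_degree {H : SimpleGraph V} {v : V} {t : ℕ}
    [Fintype (H.neighborSet v)] (ht : t ≤ H.degree v) : H.ContainsCopy (_root_.starGraph t) := by
  rw [← card_neighborSet_eq_degree] at ht
  let leaf : Fin t ↪ H.neighborSet v :=
    (Fin.castLEEmb ht).trans (Fintype.equivFin _).symm.toEmbedding
  let f : Fin (t + 1) → V := Fin.cases v fun j => leaf j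
  have hf_adj : ∀ a b, (_root_.starGraph t).Adj a b → H.Adj (f a) (f b) := by
    rintro a b ⟨hab, rfl | rfl⟩
    · obtain ⟨j, rfl⟩ := Fin.exists_succ_eq.mpr hab.symm
      exact (leaf j).2
    · obtain ⟨j, rfl⟩ := Fin.exists_succ_eq.mpr hab
      exact (leaf j).2.symm
  refine ⟨⟨f, hf_adj _ _⟩, fun a b hab => ?_⟩
  have h_leaf_ne : ∀ j, (leaf j : V) ≠ v := fun j => (leaf j).2.ne'
  induction a using Fin.cases <;> induction b using Fin.cases
  · rfl
  · exact absurd hab.symm (h_leaf_ne _)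
  · exact absurd hab (h_leaf_ne _)
  · exact congrArg Fin.succ (leaf.injective (Subtype.ext hab))

end SimpleGraph

variable {r : ℕ} {G : SimpleGraph V}

lemma colorClass_adj {c : G.edgeSet → Fin r} {i : Fin r} {u v : V} :
    (colorClass G c i).Adj u v ↔ ∃ h : G.Adj u v, c ⟨s(u, v), h⟩ = i := by
  simp only [colorClass, fromEdgeSet_adj, Set.mem_ofPred_eq, mem_edgeSet]
  exact ⟨fun h => h.1, fun h => ⟨h, h.1.ne⟩⟩

lemma HasMonoCopy.of_comp_inclusion {W : Type*} {H : SimpleGraph W} {G' : SimpleGraph V}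
    (hle : G' ≤ G) {c : G.edgeSet → Fin r}
    (h : HasMonoCopy G' H (c ∘ Set.inclusion (edgeSet_mono hle))) : HasMonoCopy G H c := by
  obtain ⟨i, f, hf⟩ := h
  have hclass : colorClass G' (c ∘ Set.inclusion (edgeSet_mono hle)) i ≤ colorClass G c i :=
    fun u x hux => by
      obtain ⟨hG', hc⟩ := colorClass_adj.mp hux
      exact colorClass_adj.mpr ⟨hle hG', hc⟩
  exact ⟨i, (Hom.ofLE hclass).comp f, hf⟩

lemma degree_colorClass_lt {t : ℕ} {c : G.edgeSet → Fin r}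
    (hc : ¬ HasMonoCopy G (_root_.starGraph t) c) (i : Fin r) (v : V)
    [Fintype ((colorClass G c i).neighborSet v)] : (colorClass G c i).degree v < t := by
  by_contra! ht
  exact hc ⟨i, containsCopy_starGraph_of_le_degree ht⟩

lemma sum_degree_colorClass [DecidableEq V] (c : G.edgeSet → Fin r) (v : V)
    [Fintype (G.neighborSet v)] [∀ i, Fintype ((colorClass G c i).neighborSet v)] :
    ∑ i, (colorClass G c i).degree v = G.degree v := by
  have hunion : G.neighborFinset v = univ.biUnion fun i => (colorClass G c i).neighborFinset v := by
    ext u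
    simp only [mem_neighborFinset, mem_biUnion, mem_univ, true_and, colorClass_adj]
    exact ⟨fun h => ⟨_, h, rfl⟩, fun ⟨_, h, _⟩ => h⟩
  have hdisj : (Set.univ : Set (Fin r)).PairwiseDisjoint
      fun i => (colorClass G c i).neighborFinset v := by
    intro i _ j _ hij
    refine Finset.disjoint_left.mpr fun u hi hj => hij ?_
    obtain ⟨_, rfl⟩ := colorClass_adj.mp ((mem_neighborFinset _ _ _).mp hi)
    obtain ⟨_, rfl⟩ := colorClass_adj.mp ((mem_neighborFinset _ _ _).mp hj)
    rfl
  rw [degree, hunion, card_biUnion (by simpa using hdisj)]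
  rfl

lemma degree_colorClass_eq [DecidableEq V] {t : ℕ} {c : G.edgeSet → Fin r}
    (hc : ¬ HasMonoCopy G (_root_.starGraph t) c) {v : V} [Fintype (G.neighborSet v)]
    [∀ i, Fintype ((colorClass G c i).neighborSet v)] (hd : G.degree v = r * (t - 1))
    (i : Fin r) : (colorClass G c i).degree v = t - 1 := by
  have hle : ∀ j ∈ univ, (colorClass G c j).degree v ≤ t - 1 := fun j _ => by
    have := degree_colorClass_lt hc j v
    omega
  refine (sum_eq_sum_iff_of_le hle).mp ?_ i (mem_univ i)
  rw [sum_degree_colorClass, hd, sum_const, card_univ, Fintype.card_fin, smul_eq_mul]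

/-- Both colorings use every color exactly `t - 1` times at `v`; if they differed only at `vw`,
the `c₂`-class of the color `c₁ (vw)` would be the `c₁`-class minus `vw`,
with fewer edges at `v`. -/
lemma eq_of_comp_inclusion_deleteEdges_eq [Fintype V] {t : ℕ} {v w : V} (hw : G.Adj v w)
    (hd : (G.neighborSet v).ncard = r * (t - 1)) {c₁ c₂ : G.edgeSet → Fin r}
    (hc₁ : ¬ HasMonoCopy G (_root_.starGraph t) c₁) (hc₂ : ¬ HasMonoCopy G (_root_.starGraph t) c₂)
    (h : c₁ ∘ Set.inclusion (edgeSet_mono (G.deleteEdges_le {s(v, w)})) =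
      c₂ ∘ Set.inclusion (edgeSet_mono (G.deleteEdges_le {s(v, w)}))) :
    c₁ = c₂ := by
  classical
  have hdeg : G.degree v = r * (t - 1) := by
    rwa [← card_neighborSet_eq_degree, ← Nat.card_eq_fintype_card, Nat.card_coe_set_eq]
  have hagree : ∀ e : G.edgeSet, e.1 ≠ s(v, w) → c₁ e = c₂ e := fun e he =>
    congrFun h ⟨e, by rw [edgeSet_deleteEdges]; exact ⟨e.2, he⟩⟩
  let e₀ : G.edgeSet := ⟨s(v, w), hw⟩
  have he₀ : c₁ e₀ = c₂ e₀ := by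
    by_contra hne
    have hle : colorClass G c₂ (c₁ e₀) ≤ colorClass G c₁ (c₁ e₀) := fun x y hxy => by
      obtain ⟨hG, hc⟩ := colorClass_adj.mp hxy
      refine colorClass_adj.mpr ⟨hG, ?_⟩
      rwa [hagree _ fun heq => hne ?_]
      rw [← hc]
      exact congrArg c₂ (Subtype.ext heq)
    have hlt := degree_lt_degree_of_le hle (colorClass_adj.mpr ⟨hw, rfl⟩)
      fun h => hne (colorClass_adj.mp h).2.symm
    rw [degree_colorClass_eq hc₁ hdeg, degree_colorClass_eq hc₂ hdeg] at hlt
    exact hlt.false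
  funext e
  by_cases he : e.1 = s(v, w)
  · rwa [show e = e₀ from Subtype.ext he]
  · exact hagree e he

end

theorem stmt5_general {V : Type*} [Fintype V] (r t : ℕ)
    (G : SimpleGraph V) (v : V) (hd : (G.neighborSet v).ncard = r * (t - 1))
    (w : V) (hw : G.Adj v w) :
    goodCount r (_root_.starGraph t) G ≤ goodCount r (_root_.starGraph t) (G.deleteEdges {s(v, w)}) := by
  let ι := Set.inclusion (edgeSet_mono (G.deleteEdges_le {s(v, w)}))
  refine Nat.card_le_card_of_injective
    (fun c => ⟨c.1 ∘ ι, fun h => c.2 (h.of_comp_inclusion (G.deleteEdges_le _))⟩) ?_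
  rintro ⟨c₁, hc₁⟩ ⟨c₂, hc₂⟩ h
  exact Subtype.ext (eq_of_comp_inclusion_deleteEdges_eq hw hd hc₁ hc₂ (congrArg Subtype.val h))

theorem stmt5 {V : Type*} [Fintype V] (r t : ℕ) (hr : 2 ≤ r) (ht : 3 ≤ t)
    (G : SimpleGraph V) (v : V) (hd : (G.neighborSet v).ncard = r * (t - 1))
    (w : V) (hw : G.Adj v w) :
    goodCount r (_root_.starGraph t) G ≤ goodCount r (_root_.starGraph t) (G.deleteEdges {s(v, w)}) :=
  stmt5_general r t G v hd w hw
end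

section
/- For r colors and forbidden star S₃: f(2r−2) = r·(2r−2)!/2^{r−1} and f(2r−3) = (r+1)·(2r−2)!/(3·2^{r−1}). -/
open Finset

/-- `fStar r x cap`: the number of `r`-edge-colorings of a star with `x` edges, where one
specified edge is precolored with color `0`, such that every color appears at most `cap`
times among the `x` edges. The remaining `x - 1` edges are colored freely. -/
def fStar (r x cap : ℕ) : ℕ :=
  Fintype.card {c : Fin (x - 1) → Fin r //
    ∀ i : Fin r,
      ((Finset.univ.filter fun e => c e = i).card + if (i : ℕ) = 0 then 1 else 0) ≤ cap}




def Good {r : ℕ} (cap : Fin r → ℕ) (n : ℕ) (c : Fin n → Fin r) : Prop :=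
  ∀ i, (Finset.univ.filter fun e => c e = i).card ≤ cap i

instance {r n : ℕ} (cap : Fin r → ℕ) : DecidablePred (Good cap n) := fun _ => by
  unfold Good; infer_instance

def cnt {r : ℕ} (cap : Fin r → ℕ) (n : ℕ) : ℕ :=
  Fintype.card {c : Fin n → Fin r // Good cap n c}

lemma cnt_zero {r : ℕ} (cap : Fin r → ℕ) : cnt cap 0 = 1 := by
  rw [cnt, Fintype.card_eq_one_iff]
  refine ⟨⟨finZeroElim, fun i => by simp⟩, fun c => Subtype.ext (funext fun e => e.elim0)⟩

lemma fiber_snoc {n r : ℕ} (c : Fin n → Fin r) (i j : Fin r) :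
    (univ.filter fun e : Fin (n+1) => (Fin.snoc c i : Fin (n+1) → Fin r) e = j).card
      = (univ.filter fun e => c e = j).card + if i = j then 1 else 0 := by
  rw [Finset.card_filter, Finset.card_filter, Fin.sum_univ_castSucc]
  simp [Fin.snoc_castSucc, Fin.snoc_last]

lemma key_fiber {n r : ℕ} (c : Fin (n+1) → Fin r) (i : Fin r) (hl : c (Fin.last n) = i)
    (j : Fin r) :
    (univ.filter fun e : Fin (n+1) => c e = j).card
      = (univ.filter fun e : Fin n => c e.castSucc = j).card + if i = j then 1 else 0 := by
  have hs : c = Fin.snoc (fun e : Fin n => c e.castSucc) i := by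
    rw [← hl]; exact (Fin.snoc_init_self c).symm
  conv_lhs => rw [hs]
  exact fiber_snoc _ _ _

lemma good_iff {n r : ℕ} (cap : Fin r → ℕ) (i : Fin r) (h0 : cap i ≠ 0)
    (c : Fin (n+1) → Fin r) (hl : c (Fin.last n) = i) :
    Good cap (n+1) c ↔ Good (Function.update cap i (cap i - 1)) n (fun e => c e.castSucc) := by
  constructor
  · intro hc j
    have hj := hc j; rw [key_fiber c i hl j] at hj
    rcases eq_or_ne i j with rfl | hij
    · rw [Function.update_self]; beta_reduce at hj ⊢; simp at hj; omega
    · rw [Function.update_of_ne hij.symm]; simpa [hij] using hj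
  · intro hc j
    rw [key_fiber c i hl j]
    have hj := hc j
    rcases eq_or_ne i j with rfl | hij
    · rw [Function.update_self] at hj; beta_reduce at hj ⊢; simp; omega
    · rw [Function.update_of_ne hij.symm] at hj; simpa [hij] using hj

lemma card_fix {r : ℕ} (cap : Fin r → ℕ) (n : ℕ) (i : Fin r) :
    Fintype.card {c : {c : Fin (n+1) → Fin r // Good cap (n+1) c} // c.1 (Fin.last n) = i}
      = if cap i = 0 then 0 else cnt (Function.update cap i (cap i - 1)) n := by
  split_ifs with h0
  · rw [Fintype.card_eq_zero_iff]
    constructor; rintro ⟨⟨c, hc⟩, hlast⟩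
    have h1 := hc i; rw [h0] at h1
    have h2 : (Fin.last n) ∈ univ.filter fun e => c e = i := by
      simp only [mem_filter, mem_univ, true_and]; exact hlast
    have := Finset.card_pos.mpr ⟨_, h2⟩; omega
  · rw [cnt]
    apply Fintype.card_congr
    refine ⟨fun c => ⟨fun e => c.1.1 e.castSucc, (good_iff cap i h0 c.1.1 c.2).mp c.1.2⟩,
      fun d => ⟨⟨(Fin.snoc (α := fun _ => Fin r) d.1 i), ?_⟩, by simp⟩, ?_, ?_⟩
    · have he : (fun e : Fin n => Fin.snoc (α := fun _ => Fin r) d.1 i e.castSucc) = d.1 := by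
        funext e; simp
      rw [good_iff cap i h0 _ (by simp), he]; exact d.2
    · rintro ⟨⟨c, hc⟩, hlast⟩
      apply Subtype.ext; apply Subtype.ext
      simp only
      rw [← hlast]; exact Fin.snoc_init_self c
    · rintro ⟨d, hd⟩
      apply Subtype.ext
      simp only
      funext e; simp

lemma cnt_succ {r : ℕ} (cap : Fin r → ℕ) (n : ℕ) :
    cnt cap (n+1)
      = ∑ i : Fin r, if cap i = 0 then 0 else cnt (Function.update cap i (cap i - 1)) n := by
  have h := (Fintype.card_congr (Equiv.sigmaFiberEquiv
    (fun c : {c : Fin (n+1) → Fin r // Good cap (n+1) c} => c.1 (Fin.last n)))).symm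
  rw [cnt, h, Fintype.card_sigma]
  exact Finset.sum_congr rfl fun i _ => card_fix cap n i

def capA {r : ℕ} (cap : Fin r → ℕ) : ℕ := (Finset.univ.filter fun i => cap i = 1).card
def capB {r : ℕ} (cap : Fin r → ℕ) : ℕ := (Finset.univ.filter fun i => cap i = 2).card

lemma filter_update_card {r : ℕ} (cap : Fin r → ℕ) (i : Fin r) (x w : ℕ) :
    (univ.filter fun j => Function.update cap i x j = w).card + (if cap i = w then 1 else 0)
      = (univ.filter fun j => cap j = w).card + (if x = w then 1 else 0) := by
  rw [Finset.card_filter, Finset.card_filter,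
    ← Finset.sum_erase_add _ _ (Finset.mem_univ i), ← Finset.sum_erase_add _ _ (Finset.mem_univ i)]
  have hs : ∀ j ∈ univ.erase i, (if Function.update cap i x j = w then 1 else 0)
      = (if cap j = w then 1 else 0) := by
    intro j hj; rw [Function.update_of_ne (Finset.ne_of_mem_erase hj)]
  rw [Finset.sum_congr rfl hs, Function.update_self]
  omega
lemma idQ2 (A B C : ℕ) (h : A + 2*B = C + 3) :
    A * ((A-1) * (A-1-1) + 4*(A-1)*B + 4*B*B)
      + B * (2 * ((A+1)*A + 4*(A+1)*(B-1) + 4*(B-1)*(B-1)))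
    = (C+1) * (A*(A-1) + 4*A*B + 4*B*B) := by
  rcases A with _|_|a
  · rcases B with _|_|b
    · omega
    · omega
    · obtain rfl : C = 2*b+1 := by omega
      simp [Nat.succ_sub_one]; ring
  · rcases B with _|_|b
    · omega
    · obtain rfl : C = 0 := by omega
      norm_num
    · obtain rfl : C = 2*b+2 := by omega
      simp [Nat.succ_sub_one]; ring
  · rcases B with _|_|b
    · obtain rfl : a = C+1 := by omega
      simp [Nat.succ_sub_one]; ring
    · obtain rfl : C = a+1 := by omega
      simp [Nat.succ_sub_one]; ring
    · obtain rfl : C = a+2*b+3 := by omega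
      simp [Nat.succ_sub_one]; ring

lemma idQ3 (A B C : ℕ) (h : A + 2*B = C + 4) :
    A * ((A-1)*(A-1-1)*(A-1-1-1) + 6*(A-1)*(A-1-1)*B + 12*(A-1)*B*B
        + 8*B*(B-1)*(B-1-1) + 24*B*(B-1))
      + B * (2 * ((A+1)*A*(A-1) + 6*(A+1)*A*(B-1) + 12*(A+1)*(B-1)*(B-1)
        + 8*(B-1)*(B-1-1)*(B-1-1-1) + 24*(B-1)*(B-1-1)))
    = (C+1) * (A*(A-1)*(A-1-1) + 6*A*(A-1)*B + 12*A*B*B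
        + 8*B*(B-1)*(B-1-1) + 24*B*(B-1)) := by
  rcases A with _|_|_|a
  · rcases B with _|_|_|b
    · omega
    · omega
    · obtain rfl : C = 0 := by omega
      norm_num
    · obtain rfl : C = 2*b+2 := by omega
      simp [Nat.succ_sub_one]; ring
  · rcases B with _|_|_|b
    · omega
    · omega
    · obtain rfl : C = 1 := by omega
      norm_num
    · obtain rfl : C = 2*b+3 := by omega
      simp [Nat.succ_sub_one]; ring
  · rcases B with _|_|_|b
    · omega
    · obtain rfl : C = 0 := by omega
      norm_num
    · obtain rfl : C = 2 := by omega
      norm_num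
    · obtain rfl : C = 2*b+4 := by omega
      simp [Nat.succ_sub_one]; ring
  · rcases B with _|_|_|b
    · obtain rfl : a = C+1 := by omega
      simp [Nat.succ_sub_one]; ring
    · obtain rfl : C = a+1 := by omega
      simp [Nat.succ_sub_one]; ring
    · obtain rfl : C = a+3 := by omega
      simp [Nat.succ_sub_one]; ring
    · obtain rfl : C = a+2*b+5 := by omega
      simp [Nat.succ_sub_one]; ring
lemma capA_update {r : ℕ} (cap : Fin r → ℕ) (i : Fin r) (x : ℕ) :
    capA (Function.update cap i x) + (if cap i = 1 then 1 else 0)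
      = capA cap + (if x = 1 then 1 else 0) :=
  filter_update_card cap i x 1

lemma capB_update {r : ℕ} (cap : Fin r → ℕ) (i : Fin r) (x : ℕ) :
    capB (Function.update cap i x) + (if cap i = 2 then 1 else 0)
      = capB cap + (if x = 2 then 1 else 0) :=
  filter_update_card cap i x 2

lemma update_le {r : ℕ} (cap : Fin r → ℕ) (hle : ∀ i, cap i ≤ 2) (i : Fin r) (x : ℕ)
    (hx : x ≤ 2) : ∀ j, Function.update cap i x j ≤ 2 := by
  intro j
  rcases eq_or_ne j i with rfl | hj
  · simpa using hx
  · rw [Function.update_of_ne hj]; exact hle j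

lemma L2 : ∀ N, 2 ≤ N → ∀ (r : ℕ) (cap : Fin r → ℕ), (∀ i, cap i ≤ 2) →
    capA cap + 2 * capB cap = N →
    cnt cap (N - 2) * 2 ^ (capB cap + 1)
      = (N - 2).factorial
          * (capA cap * (capA cap - 1) + 4 * capA cap * capB cap + 4 * capB cap * capB cap) := by
  intro N hN
  induction N, hN using Nat.le_induction with
  | base =>
    intro r cap hle hAB
    rw [show (2:ℕ) - 2 = 0 from rfl, cnt_zero, Nat.factorial_zero]
    rcases (by omega : (capB cap = 0 ∧ capA cap = 2) ∨ (capB cap = 1 ∧ capA cap = 0)) with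
      ⟨h1, h2⟩ | ⟨h1, h2⟩ <;> rw [h1, h2] <;> norm_num
  | succ N hN ih =>
    intro r cap hle hAB
    have hsub : N + 1 - 2 = (N - 2) + 1 := by omega
    rw [hsub, cnt_succ, Finset.sum_mul]
    have key : ∀ i : Fin r,
        (if cap i = 0 then 0 else cnt (Function.update cap i (cap i - 1)) (N-2)) * 2 ^ (capB cap + 1)
        = (if cap i = 1 then (N-2).factorial * ((capA cap - 1)*(capA cap - 1-1)
              + 4*(capA cap - 1)*capB cap + 4*capB cap*capB cap) else 0)
          + (if cap i = 2 then 2 * ((N-2).factorial * ((capA cap + 1)*capA cap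
              + 4*(capA cap + 1)*(capB cap - 1) + 4*(capB cap - 1)*(capB cap - 1))) else 0) := by
      intro i
      have hle2 := hle i
      rcases (by omega : cap i = 0 ∨ cap i = 1 ∨ cap i = 2) with h | h | h <;> rw [h] <;> norm_num
      · -- cap i = 1
        have h1 := capA_update cap i 0; rw [h] at h1; norm_num at h1
        have h2 := capB_update cap i 0; rw [h] at h2; norm_num at h2
        have hAB' : capA (Function.update cap i 0) + 2 * capB (Function.update cap i 0) = N := by
          omega
        have hres := ih r _ (update_le cap hle i 0 (by norm_num)) hAB'
        rw [h2] at hres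
        rw [show capA (Function.update cap i 0) = capA cap - 1 by omega] at hres
        exact hres
      · -- cap i = 2
        have h1 := capA_update cap i 1; rw [h] at h1; norm_num at h1
        have h2 := capB_update cap i 1; rw [h] at h2; norm_num at h2
        have hAB' : capA (Function.update cap i 1) + 2 * capB (Function.update cap i 1) = N := by
          omega
        have hres := ih r _ (update_le cap hle i 1 (by norm_num)) hAB'
        rw [show capA (Function.update cap i 1) = capA cap + 1 by omega,
          Nat.add_sub_cancel] at hres
        calc cnt (Function.update cap i 1) (N-2) * 2 ^ (capB cap + 1)
            = (cnt (Function.update cap i 1) (N-2)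
                * 2 ^ (capB (Function.update cap i 1) + 1)) * 2 := by
              rw [show capB cap + 1 = (capB (Function.update cap i 1) + 1) + 1 by omega]; ring
          _ = ((N-2).factorial * ((capA cap + 1)*capA cap
                + 4*(capA cap + 1)*(capB (Function.update cap i 1))
                + 4*(capB (Function.update cap i 1))*(capB (Function.update cap i 1)))) * 2 := by
              rw [hres]
          _ = 2 * ((N-2).factorial * ((capA cap + 1)*capA cap
                + 4*(capA cap + 1)*(capB cap - 1) + 4*(capB cap - 1)*(capB cap - 1))) := by
              rw [show capB (Function.update cap i 1) = capB cap - 1 by omega]; ring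
    rw [Finset.sum_congr rfl fun i _ => key i, Finset.sum_add_distrib,
      ← Finset.sum_filter, ← Finset.sum_filter, Finset.sum_const, Finset.sum_const,
      smul_eq_mul, smul_eq_mul]
    rw [Nat.factorial_succ]
    have hid := idQ2 (capA cap) (capB cap) (N - 2) (by omega)
    calc (univ.filter fun i => cap i = 1).card * ((N-2).factorial
            * ((capA cap - 1)*(capA cap - 1-1) + 4*(capA cap - 1)*capB cap
              + 4*capB cap*capB cap))
          + (univ.filter fun i => cap i = 2).card * (2 * ((N-2).factorial
            * ((capA cap + 1)*capA cap + 4*(capA cap + 1)*(capB cap - 1)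
              + 4*(capB cap - 1)*(capB cap - 1))))
        = (N-2).factorial * (capA cap * ((capA cap - 1)*(capA cap - 1-1)
              + 4*(capA cap - 1)*capB cap + 4*capB cap*capB cap)
            + capB cap * (2 * ((capA cap + 1)*capA cap + 4*(capA cap + 1)*(capB cap - 1)
              + 4*(capB cap - 1)*(capB cap - 1)))) := by
          show capA cap * _ + capB cap * _ = _
          ring
      _ = (N-2).factorial * (((N-2)+1) * (capA cap * (capA cap - 1) + 4 * capA cap * capB cap
            + 4 * capB cap * capB cap)) := by rw [hid]
      _ = ((N-2)+1) * (N-2).factorial * (capA cap * (capA cap - 1) + 4 * capA cap * capB cap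
            + 4 * capB cap * capB cap) := by ring
lemma L3 : ∀ N, 3 ≤ N → ∀ (r : ℕ) (cap : Fin r → ℕ), (∀ i, cap i ≤ 2) →
    capA cap + 2 * capB cap = N →
    cnt cap (N - 3) * (2 ^ capB cap * 6)
      = (N - 3).factorial
          * (capA cap * (capA cap - 1) * (capA cap - 1 - 1)
            + 6 * capA cap * (capA cap - 1) * capB cap
            + 12 * capA cap * capB cap * capB cap
            + 8 * capB cap * (capB cap - 1) * (capB cap - 1 - 1)
            + 24 * capB cap * (capB cap - 1)) := by
  intro N hN
  induction N, hN using Nat.le_induction with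
  | base =>
    intro r cap hle hAB
    rw [show (3:ℕ) - 3 = 0 from rfl, cnt_zero, Nat.factorial_zero]
    rcases (by omega : (capB cap = 0 ∧ capA cap = 3) ∨ (capB cap = 1 ∧ capA cap = 1)) with
      ⟨h1, h2⟩ | ⟨h1, h2⟩ <;> rw [h1, h2] <;> norm_num
  | succ N hN ih =>
    intro r cap hle hAB
    have hsub : N + 1 - 3 = (N - 3) + 1 := by omega
    rw [hsub, cnt_succ, Finset.sum_mul]
    have key : ∀ i : Fin r,
        (if cap i = 0 then 0 else cnt (Function.update cap i (cap i - 1)) (N-3))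
            * (2 ^ capB cap * 6)
        = (if cap i = 1 then (N-3).factorial *
              ((capA cap - 1)*(capA cap - 1-1)*(capA cap - 1-1-1)
                + 6*(capA cap - 1)*(capA cap - 1-1)*capB cap
                + 12*(capA cap - 1)*capB cap*capB cap
                + 8*capB cap*(capB cap - 1)*(capB cap - 1-1)
                + 24*capB cap*(capB cap - 1)) else 0)
          + (if cap i = 2 then 2 * ((N-3).factorial *
              ((capA cap + 1)*capA cap*(capA cap - 1)
                + 6*(capA cap + 1)*capA cap*(capB cap - 1)
                + 12*(capA cap + 1)*(capB cap - 1)*(capB cap - 1)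
                + 8*(capB cap - 1)*(capB cap - 1-1)*(capB cap - 1-1-1)
                + 24*(capB cap - 1)*(capB cap - 1-1))) else 0) := by
      intro i
      have hle2 := hle i
      rcases (by omega : cap i = 0 ∨ cap i = 1 ∨ cap i = 2) with h | h | h <;> rw [h] <;> norm_num
      · -- cap i = 1
        have h1 := capA_update cap i 0; rw [h] at h1; norm_num at h1
        have h2 := capB_update cap i 0; rw [h] at h2; norm_num at h2
        have hAB' : capA (Function.update cap i 0) + 2 * capB (Function.update cap i 0) = N := by
          omega
        have hres := ih r _ (update_le cap hle i 0 (by norm_num)) hAB'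
        rw [h2] at hres
        rw [show capA (Function.update cap i 0) = capA cap - 1 by omega] at hres
        exact hres
      · -- cap i = 2
        have h1 := capA_update cap i 1; rw [h] at h1; norm_num at h1
        have h2 := capB_update cap i 1; rw [h] at h2; norm_num at h2
        have hAB' : capA (Function.update cap i 1) + 2 * capB (Function.update cap i 1) = N := by
          omega
        have hres := ih r _ (update_le cap hle i 1 (by norm_num)) hAB'
        rw [show capA (Function.update cap i 1) = capA cap + 1 by omega,
          Nat.add_sub_cancel] at hres
        calc cnt (Function.update cap i 1) (N-3) * (2 ^ capB cap * 6)
            = (cnt (Function.update cap i 1) (N-3)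
                * (2 ^ capB (Function.update cap i 1) * 6)) * 2 := by
              rw [show capB cap = capB (Function.update cap i 1) + 1 by omega]; ring
          _ = ((N-3).factorial *
              ((capA cap + 1)*capA cap*(capA cap - 1)
                + 6*(capA cap + 1)*capA cap*(capB (Function.update cap i 1))
                + 12*(capA cap + 1)*(capB (Function.update cap i 1))*(capB (Function.update cap i 1))
                + 8*(capB (Function.update cap i 1))*(capB (Function.update cap i 1) - 1)*(capB (Function.update cap i 1) - 1-1)
                + 24*(capB (Function.update cap i 1))*(capB (Function.update cap i 1) - 1))) * 2 := by
              rw [hres]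
          _ = _ := by
              rw [show capB (Function.update cap i 1) = capB cap - 1 by omega]; ring
    rw [Finset.sum_congr rfl fun i _ => key i, Finset.sum_add_distrib,
      ← Finset.sum_filter, ← Finset.sum_filter, Finset.sum_const, Finset.sum_const,
      smul_eq_mul, smul_eq_mul, Nat.factorial_succ]
    have hid := idQ3 (capA cap) (capB cap) (N - 3) (by omega)
    calc (univ.filter fun i => cap i = 1).card * ((N-3).factorial *
              ((capA cap - 1)*(capA cap - 1-1)*(capA cap - 1-1-1)
                + 6*(capA cap - 1)*(capA cap - 1-1)*capB cap
                + 12*(capA cap - 1)*capB cap*capB cap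
                + 8*capB cap*(capB cap - 1)*(capB cap - 1-1)
                + 24*capB cap*(capB cap - 1)))
          + (univ.filter fun i => cap i = 2).card * (2 * ((N-3).factorial *
              ((capA cap + 1)*capA cap*(capA cap - 1)
                + 6*(capA cap + 1)*capA cap*(capB cap - 1)
                + 12*(capA cap + 1)*(capB cap - 1)*(capB cap - 1)
                + 8*(capB cap - 1)*(capB cap - 1-1)*(capB cap - 1-1-1)
                + 24*(capB cap - 1)*(capB cap - 1-1))))
        = (N-3).factorial * (capA cap *
              ((capA cap - 1)*(capA cap - 1-1)*(capA cap - 1-1-1)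
                + 6*(capA cap - 1)*(capA cap - 1-1)*capB cap
                + 12*(capA cap - 1)*capB cap*capB cap
                + 8*capB cap*(capB cap - 1)*(capB cap - 1-1)
                + 24*capB cap*(capB cap - 1))
            + capB cap * (2 *
              ((capA cap + 1)*capA cap*(capA cap - 1)
                + 6*(capA cap + 1)*capA cap*(capB cap - 1)
                + 12*(capA cap + 1)*(capB cap - 1)*(capB cap - 1)
                + 8*(capB cap - 1)*(capB cap - 1-1)*(capB cap - 1-1-1)
                + 24*(capB cap - 1)*(capB cap - 1-1)))) := by
          show capA cap * _ + capB cap * _ = _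
          ring
      _ = (N-3).factorial * (((N-3)+1) *
            (capA cap * (capA cap - 1) * (capA cap - 1 - 1)
            + 6 * capA cap * (capA cap - 1) * capB cap
            + 12 * capA cap * capB cap * capB cap
            + 8 * capB cap * (capB cap - 1) * (capB cap - 1 - 1)
            + 24 * capB cap * (capB cap - 1))) := by rw [hid]
      _ = _ := by ring
def cap0 (r : ℕ) : Fin r → ℕ := fun i => if (i : ℕ) = 0 then 1 else 2

lemma fStar_eq (r x : ℕ) : fStar r x 2 = cnt (cap0 r) (x - 1) := by
  rw [fStar, cnt]
  apply Fintype.card_congr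
  apply Equiv.subtypeEquivRight
  intro c
  unfold Good
  constructor
  · intro h i
    have := h i
    by_cases hi : (i:ℕ) = 0 <;> simp [cap0, hi] at this ⊢ <;> omega
  · intro h i
    have := h i
    by_cases hi : (i:ℕ) = 0 <;> simp [cap0, hi] at this ⊢ <;> omega

lemma capA_cap0 (r : ℕ) (hr : 1 ≤ r) : capA (cap0 r) = 1 := by
  have he : (univ.filter fun i : Fin r => cap0 r i = 1) = {(⟨0, hr⟩ : Fin r)} := by
    ext i
    simp only [mem_filter, mem_univ, true_and, mem_singleton, cap0]
    by_cases hi : (i:ℕ) = 0 <;> simp [hi, Fin.ext_iff]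
  rw [capA, he, card_singleton]

lemma capB_cap0 (r : ℕ) (hr : 1 ≤ r) : capB (cap0 r) = r - 1 := by
  have h := Finset.card_filter_add_card_filter_not
    (s := (univ : Finset (Fin r))) (p := fun i => cap0 r i = 1)
  have he : (univ.filter fun i : Fin r => ¬ cap0 r i = 1)
      = univ.filter fun i : Fin r => cap0 r i = 2 := by
    apply Finset.filter_congr; intro i _
    by_cases hi : (i:ℕ) = 0 <;> simp [cap0, hi]
  rw [he] at h
  have hA := capA_cap0 r hr
  rw [capA] at hA
  rw [capB]
  rw [Finset.card_univ, Fintype.card_fin] at h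
  omega

lemma cap0_le (r : ℕ) : ∀ i, cap0 r i ≤ 2 := by
  intro i; unfold cap0; split <;> omega
theorem stmt13 (r : ℕ) (hr : 2 ≤ r) :
    fStar r (2 * r - 2) 2 * 2 ^ (r - 1) = r * Nat.factorial (2 * r - 2) ∧
    fStar r (2 * r - 3) 2 * (3 * 2 ^ (r - 1)) = (r + 1) * Nat.factorial (2 * r - 2) := by
  obtain ⟨s, rfl⟩ : ∃ s, r = s + 2 := ⟨r - 2, by omega⟩
  simp only [show 2 * (s + 2) - 2 = 2 * s + 2 from by omega,
    show 2 * (s + 2) - 3 = 2 * s + 1 from by omega,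
    show s + 2 - 1 = s + 1 from by omega]
  have hA : capA (cap0 (s+2)) = 1 := capA_cap0 (s+2) (by omega)
  have hB : capB (cap0 (s+2)) = s + 1 := capB_cap0 (s+2) (by omega)
  constructor
  · have hf : fStar (s+2) (2*s+2) 2 = cnt (cap0 (s+2)) (2*s+1) := by
      rw [fStar_eq]
      try congr 1
      try omega
    have hL := L2 (2*s+3) (by omega) (s+2) (cap0 (s+2)) (cap0_le (s+2)) (by rw [hA, hB]; omega)
    rw [hA, hB, show 2*s+3-2 = 2*s+1 from by omega] at hL
    apply Nat.eq_of_mul_eq_mul_right (show 0 < 2 from by norm_num)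
    rw [hf]
    have hfac1 : (2*s+2).factorial = (2*s+2) * (2*s+1).factorial := by
      rw [show 2*s+2 = (2*s+1)+1 from by omega, Nat.factorial_succ]
    calc cnt (cap0 (s+2)) (2*s+1) * 2 ^ (s+1) * 2
        = cnt (cap0 (s+2)) (2*s+1) * 2 ^ ((s+1)+1) := by ring
      _ = (2*s+1).factorial * (1*(1-1) + 4*1*(s+1) + 4*(s+1)*(s+1)) := hL
      _ = (s+2) * (2*s+2).factorial * 2 := by
          rw [hfac1, Nat.sub_self]; ring
  · have hf : fStar (s+2) (2*s+1) 2 = cnt (cap0 (s+2)) (2*s) := by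
      rw [fStar_eq]
      try congr 1
      try omega
    have hL := L3 (2*s+3) (by omega) (s+2) (cap0 (s+2)) (cap0_le (s+2)) (by rw [hA, hB]; omega)
    rw [hA, hB, show 2*s+3-3 = 2*s from by omega] at hL
    apply Nat.eq_of_mul_eq_mul_right (show 0 < 2 from by norm_num)
    rw [hf]
    have haux : 1*(1-1)*(1-1-1) + 6*1*(1-1)*(s+1) + 12*1*(s+1)*(s+1)
        + 8*(s+1)*((s+1)-1)*((s+1)-1-1) + 24*(s+1)*((s+1)-1)
        = 4*(s+3)*(s+1)*(2*s+1) := by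
      rcases s with _ | t
      · norm_num
      · simp only [Nat.add_sub_cancel, Nat.succ_sub_one]
        ring
    calc cnt (cap0 (s+2)) (2*s) * (3 * 2 ^ (s+1)) * 2
        = cnt (cap0 (s+2)) (2*s) * (2 ^ (s+1) * 6) := by ring
      _ = (2*s).factorial * (1*(1-1)*(1-1-1) + 6*1*(1-1)*(s+1) + 12*1*(s+1)*(s+1)
            + 8*(s+1)*((s+1)-1)*((s+1)-1-1) + 24*(s+1)*((s+1)-1)) := hL
      _ = (2*s).factorial * (4*(s+3)*(s+1)*(2*s+1)) := by rw [haux]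
      _ = (s+2+1) * (2*s+2).factorial * 2 := by
          have hfac1 : (2*s+2).factorial = (2*s+2) * (2*s+1).factorial := by
            rw [show 2*s+2 = (2*s+1)+1 from by omega, Nat.factorial_succ]
          have hfac0 : (2*s+1).factorial = (2*s+1) * (2*s).factorial := by
            rw [show 2*s+1 = (2*s)+1 from by omega, Nat.factorial_succ]
          rw [hfac1, hfac0]; ring
end

section
/- For all sufficiently large t, the function g(a) = (2^{4t−5−2a} · (∑_{k=a−t}^{t−2} C(a−1,k))²)^a, defined for integers t−1 ≤ a ≤ 2t−3, attains its maximum at a = 2t−3, where g(2t−3) = (2·C(2t−3, t−2)²)^{2t−3}. -/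
/-!
Write `g(a) = (2 T(a)²)^a` with `T(a) = 2^(2t-3-a) S(a)`, where `S(a)` is the window sum
`∑_{k=a-t}^{t-2} C(a-1,k)`. Pascal's rule gives `S(a+1) = 2 S(a) - C(a-1,a-t) - C(a-1,t-2)`,
and the two boundary terms are the smallest of at least three terms of the window, so
`4 S(a) ≤ 3 S(a+1) ≤ 6 S(a)`. Hence `T` is decreasing, so `T(a+1) ≥ T(2t-3) = C(2t-3,t-2)`,
which is at least `4^(t-2)/(2t-3)`, while `T(a) ≤ 3/2 T(a+1)`. Together these give
`g(a) ≤ g(a+1)` as soon as `t ≥ 5`.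
-/

open Finset

/-- `g(a) = (2^{4t-5-2a} (∑_{k=a-t}^{t-2} C(a-1,k))²)^a`. -/
def gFun (t a : ℕ) : ℕ :=
  (2 ^ (4 * t - 5 - 2 * a) * (∑ k ∈ Finset.Icc (a - t) (t - 2), (a - 1).choose k) ^ 2) ^ a

theorem Nat.choose_succ_le_choose {n m : ℕ} (h : n ≤ 2 * m + 1) :
    n.choose (m + 1) ≤ n.choose m := by
  refine Nat.le_of_mul_le_mul_right (c := m + 1) ?_ m.succ_pos
  rw [Nat.choose_succ_right_eq]
  exact Nat.mul_le_mul_left _ (by omega)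

theorem Nat.sum_Icc_choose_succ_add (n : ℕ) {lo hi : ℕ} (h : lo ≤ hi) :
    ∑ k ∈ Icc (lo + 1) hi, (n + 1).choose k + (n.choose lo + n.choose hi) =
      2 * ∑ k ∈ Icc lo hi, n.choose k := by
  induction hi, h using Nat.le_induction with
  | base => simp [two_mul]
  | succ hi hlo ih =>
    rw [sum_Icc_succ_top (by omega), sum_Icc_succ_top (by omega), Nat.choose_succ_succ']
    omega

theorem two_mul_sq_pow_le_two_mul_sq_pow_succ {x y a : ℕ} (hxy : 2 * x ≤ 3 * y)
    (hy : 9 ^ a ≤ 2 * 4 ^ a * y ^ 2) : (2 * x ^ 2) ^ a ≤ (2 * y ^ 2) ^ (a + 1) := by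
  rw [show (9 : ℕ) = 3 ^ 2 from rfl, show (4 : ℕ) = 2 ^ 2 from rfl, ← pow_mul, ← pow_mul] at hy
  refine Nat.le_of_mul_le_mul_left (c := 2 ^ (2 * a)) ?_ (by positivity)
  calc 2 ^ (2 * a) * (2 * x ^ 2) ^ a = 2 ^ a * (2 * x) ^ (2 * a) := by ring
    _ ≤ 2 ^ a * (3 * y) ^ (2 * a) := by gcongr
    _ = 2 ^ a * y ^ (2 * a) * 3 ^ (2 * a) := by ring
    _ ≤ 2 ^ a * y ^ (2 * a) * (2 * 2 ^ (2 * a) * y ^ 2) := by gcongr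
    _ = 2 ^ (2 * a) * (2 * y ^ 2) ^ (a + 1) := by ring

theorem sq_mul_eighty_one_pow_le {m : ℕ} (hm : 3 ≤ m) :
    (2 * m + 1) ^ 2 * 81 ^ m ≤ 2 * 256 ^ m := by
  induction m, hm using Nat.le_induction with
  | base => norm_num
  | succ m hm ih =>
    have hstep : 81 * (2 * (m + 1) + 1) ^ 2 ≤ 256 * (2 * m + 1) ^ 2 := by nlinarith
    calc (2 * (m + 1) + 1) ^ 2 * 81 ^ (m + 1) = 81 * (2 * (m + 1) + 1) ^ 2 * 81 ^ m := by ring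
      _ ≤ 256 * (2 * m + 1) ^ 2 * 81 ^ m := by gcongr
      _ = 256 * ((2 * m + 1) ^ 2 * 81 ^ m) := by ring
      _ ≤ 256 * (2 * 256 ^ m) := by gcongr
      _ = 2 * 256 ^ (m + 1) := by ring

theorem nine_pow_le_two_mul_four_pow_mul_choose_sq {m a : ℕ} (hm : 3 ≤ m) (ha : a ≤ 2 * m) :
    9 ^ a ≤ 2 * 4 ^ a * (2 * m + 1).choose m ^ 2 := by
  have hC : 4 ^ m ≤ (2 * m + 1) * (2 * m + 1).choose m :=
    (Nat.four_pow_le_two_mul_add_one_mul_central_binom m).trans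
      (Nat.mul_le_mul_left _ (Nat.choose_le_succ _ _))
  have hpow : 9 ^ a * 4 ^ (2 * m) ≤ 9 ^ (2 * m) * 4 ^ a := by
    obtain ⟨d, hd⟩ := Nat.exists_eq_add_of_le ha
    rw [hd, pow_add, pow_add]
    calc 9 ^ a * (4 ^ a * 4 ^ d) ≤ 9 ^ a * (4 ^ a * 9 ^ d) := by gcongr; norm_num
      _ = 9 ^ a * 9 ^ d * 4 ^ a := by ring
  refine Nat.le_of_mul_le_mul_left (c := (2 * m + 1) ^ 2 * 4 ^ (2 * m)) ?_ (by positivity)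
  calc (2 * m + 1) ^ 2 * 4 ^ (2 * m) * 9 ^ a = (2 * m + 1) ^ 2 * (9 ^ a * 4 ^ (2 * m)) := by ring
    _ ≤ (2 * m + 1) ^ 2 * (9 ^ (2 * m) * 4 ^ a) := by gcongr
    _ = (2 * m + 1) ^ 2 * 81 ^ m * 4 ^ a := by rw [pow_mul]; ring
    _ ≤ 2 * 256 ^ m * 4 ^ a := Nat.mul_le_mul_right _ (sq_mul_eighty_one_pow_le hm)
    _ = 2 * 4 ^ a * (4 ^ m) ^ 2 * 4 ^ (2 * m) := by
      rw [show (256 : ℕ) = 4 ^ 4 by norm_num, ← pow_mul]; ring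
    _ ≤ 2 * 4 ^ a * ((2 * m + 1) * (2 * m + 1).choose m) ^ 2 * 4 ^ (2 * m) := by gcongr
    _ = (2 * m + 1) ^ 2 * 4 ^ (2 * m) * (2 * 4 ^ a * (2 * m + 1).choose m ^ 2) := by ring

def windowSum (t a : ℕ) : ℕ := ∑ k ∈ Icc (a - t) (t - 2), (a - 1).choose k

def scaledWindowSum (t a : ℕ) : ℕ := 2 ^ (2 * t - 3 - a) * windowSum t a

section

variable {t a : ℕ}

theorem gFun_eq (ht : 2 ≤ t) (ha : a ≤ 2 * t - 3) :
    gFun t a = (2 * scaledWindowSum t a ^ 2) ^ a := by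
  rw [gFun, scaledWindowSum, windowSum, show 4 * t - 5 - 2 * a = (2 * t - 3 - a) * 2 + 1 by omega,
    pow_succ, pow_mul]
  ring

theorem windowSum_sub_one (t : ℕ) : windowSum t (t - 1) = 2 ^ (t - 2) := by
  rw [windowSum, show t - 1 - t = 0 by omega, show t - 1 - 1 = t - 2 by omega,
    ← Nat.range_succ_eq_Icc_zero, Nat.sum_range_choose]

theorem windowSum_self_add_one (ht : 2 ≤ t) : windowSum t t + 1 = 2 ^ (t - 1) := by
  rw [windowSum, Nat.sub_self, ← Nat.range_succ_eq_Icc_zero, show t - 2 + 1 = t - 1 by omega,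
    ← Nat.sum_range_choose, sum_range_succ, Nat.choose_self]

theorem windowSum_two_mul_sub_three (ht : 3 ≤ t) :
    windowSum t (2 * t - 3) = (2 * t - 3).choose (t - 2) := by
  rw [windowSum, show 2 * t - 3 - t = t - 3 by omega, show 2 * t - 3 - 1 = 2 * t - 4 by omega,
    show t - 2 = t - 3 + 1 by omega, sum_Icc_succ_top (by omega), Icc_self, sum_singleton,
    show 2 * t - 3 = 2 * t - 4 + 1 by omega, Nat.choose_succ_succ]

theorem windowSum_succ_add (ht : 0 < t) (hta : t ≤ a) (ha : a ≤ 2 * t - 2) :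
    windowSum t (a + 1) + ((a - 1).choose (a - t) + (a - 1).choose (t - 2)) =
      2 * windowSum t a := by
  have hpascal := Nat.sum_Icc_choose_succ_add (a - 1) (show a - t ≤ t - 2 by omega)
  rwa [Nat.sub_add_cancel (show 1 ≤ a by omega), ← show a + 1 - t = a - t + 1 by omega] at hpascal

theorem three_mul_boundary_le_two_mul_windowSum (ht : 3 ≤ t) (hta : t ≤ a) (ha : a ≤ 2 * t - 4) :
    3 * ((a - 1).choose (a - t) + (a - 1).choose (t - 2)) ≤ 2 * windowSum t a := by
  have hsub : ({a - t, t - 3, t - 2} : Finset ℕ) ⊆ Icc (a - t) (t - 2) := by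
    intro k
    simp only [mem_insert, mem_singleton, mem_Icc]
    omega
  have hlower := sum_le_sum_of_subset (f := fun k => (a - 1).choose k) hsub
  rw [sum_insert (by simp only [mem_insert, mem_singleton]; omega),
    sum_insert (by simp only [mem_singleton]; omega), sum_singleton] at hlower
  have hlo : (a - 1).choose (a - t) ≤ (a - 1).choose (t - 2) := by
    rw [← Nat.choose_symm (by omega), show a - 1 - (a - t) = t - 2 + 1 by omega]
    exact Nat.choose_succ_le_choose (by omega)
  have hhi : (a - 1).choose (t - 2) ≤ (a - 1).choose (t - 3) := by
    rw [show t - 2 = t - 3 + 1 by omega]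
    exact Nat.choose_succ_le_choose (by omega)
  simp only [windowSum]
  omega

theorem windowSum_succ_bounds (ht : 3 ≤ t) (ha₁ : t - 1 ≤ a) (ha₂ : a ≤ 2 * t - 4) :
    windowSum t (a + 1) ≤ 2 * windowSum t a ∧ 4 * windowSum t a ≤ 3 * windowSum t (a + 1) := by
  suffices ∃ e, windowSum t (a + 1) + e = 2 * windowSum t a ∧ 3 * e ≤ 2 * windowSum t a by
    obtain ⟨e, hsum, he⟩ := this
    omega
  rcases ha₁.eq_or_lt with rfl | hta
  -- At `a = t - 1` the window starts at the truncated index `0`: it is a full row of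
  -- Pascal's triangle and has no lower boundary term.
  · refine ⟨1, ?_, ?_⟩
    · rw [Nat.sub_add_cancel (by omega), windowSum_self_add_one (by omega), windowSum_sub_one,
        show t - 1 = t - 2 + 1 by omega, pow_succ]
      ring
    · have : 2 ≤ 2 ^ (t - 2) := Nat.le_self_pow (by omega) 2
      rw [windowSum_sub_one]
      omega
  · exact ⟨_, windowSum_succ_add (by omega) (by omega) (by omega),
      three_mul_boundary_le_two_mul_windowSum ht (by omega) ha₂⟩

theorem scaledWindowSum_eq_two_mul (ha : a < 2 * t - 3) :
    scaledWindowSum t a = 2 * (2 ^ (2 * t - 3 - (a + 1)) * windowSum t a) := by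
  rw [scaledWindowSum, show 2 * t - 3 - a = 2 * t - 3 - (a + 1) + 1 by omega, pow_succ]
  ring

theorem scaledWindowSum_succ_le (ht : 3 ≤ t) (ha₁ : t - 1 ≤ a) (ha₂ : a ≤ 2 * t - 4) :
    scaledWindowSum t (a + 1) ≤ scaledWindowSum t a := by
  rw [scaledWindowSum_eq_two_mul (a := a) (by omega), scaledWindowSum, mul_left_comm]
  exact Nat.mul_le_mul_left _ (windowSum_succ_bounds ht ha₁ ha₂).1

theorem two_mul_scaledWindowSum_le (ht : 3 ≤ t) (ha₁ : t - 1 ≤ a) (ha₂ : a ≤ 2 * t - 4) :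
    2 * scaledWindowSum t a ≤ 3 * scaledWindowSum t (a + 1) := by
  have := Nat.mul_le_mul_left (2 ^ (2 * t - 3 - (a + 1))) (windowSum_succ_bounds ht ha₁ ha₂).2
  rw [scaledWindowSum_eq_two_mul (a := a) (by omega), scaledWindowSum]
  linarith

theorem scaledWindowSum_two_mul_sub_three (ht : 3 ≤ t) :
    scaledWindowSum t (2 * t - 3) = (2 * t - 3).choose (t - 2) := by
  rw [scaledWindowSum, Nat.sub_self, pow_zero, one_mul, windowSum_two_mul_sub_three ht]

theorem scaledWindowSum_antitoneOn (ht : 3 ≤ t) :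
    AntitoneOn (scaledWindowSum t) (Set.Icc (t - 1) (2 * t - 3)) :=
  antitoneOn_of_add_one_le Set.ordConnected_Icc fun _ _ ha ha' =>
    scaledWindowSum_succ_le ht ha.1 (by have := ha'.2; omega)

theorem choose_le_scaledWindowSum (ht : 3 ≤ t) (ha : a ∈ Set.Icc (t - 1) (2 * t - 3)) :
    (2 * t - 3).choose (t - 2) ≤ scaledWindowSum t a :=
  scaledWindowSum_two_mul_sub_three ht ▸
    scaledWindowSum_antitoneOn ht ha ⟨by omega, le_rfl⟩ ha.2

theorem gFun_le_gFun_succ (ht : 5 ≤ t) (ha₁ : t - 1 ≤ a) (ha₂ : a ≤ 2 * t - 4) :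
    gFun t a ≤ gFun t (a + 1) := by
  rw [gFun_eq (by omega) (by omega), gFun_eq (by omega) (by omega)]
  refine two_mul_sq_pow_le_two_mul_sq_pow_succ (two_mul_scaledWindowSum_le (by omega) ha₁ ha₂) ?_
  have hC := choose_le_scaledWindowSum (by omega)
    (show a + 1 ∈ Set.Icc (t - 1) (2 * t - 3) from ⟨by omega, by omega⟩)
  rw [show 2 * t - 3 = 2 * (t - 2) + 1 by omega] at hC
  exact (nine_pow_le_two_mul_four_pow_mul_choose_sq (m := t - 2) (by omega) (by omega)).trans
    (by gcongr)

theorem gFun_monotoneOn (ht : 5 ≤ t) : MonotoneOn (gFun t) (Set.Icc (t - 1) (2 * t - 3)) :=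
  monotoneOn_of_le_add_one Set.ordConnected_Icc fun _ _ ha ha' =>
    gFun_le_gFun_succ ht ha.1 (by have := ha'.2; omega)

end

theorem stmt18 :
    ∃ t₀ : ℕ, ∀ t : ℕ, t₀ ≤ t →
      (∀ a : ℕ, t - 1 ≤ a → a ≤ 2 * t - 3 → gFun t a ≤ gFun t (2 * t - 3)) ∧
      gFun t (2 * t - 3) = (2 * ((2 * t - 3).choose (t - 2)) ^ 2) ^ (2 * t - 3) := by
  refine ⟨5, fun t ht => ⟨fun a ha₁ ha₂ => ?_, ?_⟩⟩
  · exact gFun_monotoneOn ht ⟨ha₁, ha₂⟩ ⟨by omega, le_rfl⟩ ha₂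
  · rw [gFun_eq (by omega) le_rfl, scaledWindowSum_two_mul_sub_three (by omega)]
end
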